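/- arXiv:2103.05605 — 3 statements merged into one kernel-verified Lean document; each statement's English description precedes it below -/
import Mathlib

section
/- The characteristic function ψ = χ_{[−1/2, 1/2]} of the interval [−1/2, 1/2] belongs to L¹(ℝ) ∩ L²(ℝ), but its Wigner transform Wψ does not belong to L¹(ℝ²). -/
open MeasureTheory Real Complex

/-- The one-dimensional Wigner transform of `ψ : ℝ → ℂ`. -/
noncomputable def wigner1 (ℏ : ℝ) (ψ : ℝ → ℂ) (z : ℝ × ℝ) : ℂ :=
  (1 / (2 * Real.pi * ℏ)) *
    ∫ y : ℝ, Complex.exp (-(Complex.I / (ℏ : ℂ)) * ((z.2 * y : ℝ) : ℂ)) *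
      ψ (z.1 + y / 2) * (starRingEnd ℂ) (ψ (z.1 - y / 2))

/-! For `|x| < 1/2` the product `ψ (x + y/2) * conj (ψ (x - y/2))` is the indicator of the window
`|y| ≤ a := 1 - 2|x|`, so the slice `p ↦ Wψ (x, p)` is the Fourier transform of that window,
`a / (π ℏ) * sinc (a p / ℏ)`. The sinc function is not integrable: on `[kπ, (k+1)π]` the integral
of `|sin t| / t` is at least `2 / ((k+1)π)`, and the harmonic series diverges. By Fubini, a function
on `ℝ × ℝ` whose slices fail to be integrable on a set of positive measure is not integrable. -/

open Set

theorem not_integrable_prod_of_not_integrable_slices {α β E : Type*} [MeasurableSpace α]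
    [MeasurableSpace β] [NormedAddCommGroup E] {μ : Measure α} {ν : Measure β} [SFinite μ]
    [SFinite ν] {f : α × β → E} {s : Set α} (hs : μ s ≠ 0)
    (hf : ∀ x ∈ s, ¬ Integrable (fun y => f (x, y)) ν) : ¬ Integrable f (μ.prod ν) :=
  fun h => hs (measure_mono_null hf (ae_iff.1 h.prod_right_ae))

namespace Real

lemma integral_abs_sin_Ioc_nat_mul_pi (k : ℕ) :
    ∫ t in Ioc (k * π) ((k + 1) * π), |sin t| = 2 := by
  have hπ : Function.Periodic (fun t => |sin t|) π := fun t => by simp [sin_add_pi]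
  rw [← intervalIntegral.integral_of_le (by gcongr; linarith), add_one_mul,
    hπ.intervalIntegral_add_eq _ 0, zero_add,
    intervalIntegral.integral_congr (g := sin) fun t ht => ?_, integral_sin]
  · norm_num
  · rw [uIcc_of_le pi_pos.le] at ht
    exact abs_of_nonneg (sin_nonneg_of_nonneg_of_le_pi ht.1 ht.2)

lemma two_div_le_integral_abs_sinc_Ioc (k : ℕ) :
    2 / ((k + 1) * π) ≤ ∫ t in Ioc (k * π) ((k + 1) * π), |sinc t| := by
  have hpos : ∀ t ∈ Ioc ((k : ℝ) * π) ((k + 1) * π), 0 < t :=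
    fun t ht => lt_of_le_of_lt (by positivity) ht.1
  rw [← integral_abs_sin_Ioc_nat_mul_pi k, ← integral_div]
  refine setIntegral_mono_on ?_ ?_ measurableSet_Ioc fun t ht => ?_
  · exact (continuous_sin.abs.div_const _).integrableOn_Ioc
  · exact continuous_sinc.abs.integrableOn_Ioc
  · rw [sinc_of_ne_zero (hpos t ht).ne', abs_div, abs_of_pos (hpos t ht)]
    exact div_le_div_of_nonneg_left (abs_nonneg _) (hpos t ht) ht.2

theorem not_integrable_sinc : ¬ Integrable sinc := by
  intro h
  have hmono : Monotone fun k : ℕ => (k : ℝ) * π :=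
    fun _ _ hjk => mul_le_mul_of_nonneg_right (Nat.cast_le.2 hjk) pi_pos.le
  have hdisj : Pairwise (Function.onFun Disjoint fun k : ℕ => Ioc (k * π) ((k + 1) * π)) := by
    simpa using hmono.pairwise_disjoint_on_Ioc_succ
  have hsum := hasSum_integral_iUnion (fun _ => measurableSet_Ioc) hdisj h.abs.integrableOn
  have hharmonic := (hsum.summable.of_nonneg_of_le (fun _ => by positivity)
    two_div_le_integral_abs_sinc_Ioc).mul_left (π / 2)
  refine not_summable_one_div_natCast ((summable_nat_add_iff 1).1 (hharmonic.congr fun k => ?_))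
  push_cast
  field_simp

lemma not_integrable_const_mul_sinc_mul {c b : ℝ} (hc : c ≠ 0) (hb : b ≠ 0) :
    ¬ Integrable (fun p => c * sinc (b * p)) := by
  intro h
  refine not_integrable_sinc ((integrable_comp_mul_left_iff sinc hb).1 ?_)
  simpa [inv_mul_cancel_left₀ hc] using h.const_mul c⁻¹

end Real

lemma integral_Icc_exp_neg_mul_I {a : ℝ} (ha : 0 ≤ a) (ω : ℝ) :
    ∫ y in Icc (-a) a, cexp (-(ω * y : ℝ) * I) = ((2 * a * sinc (a * ω) : ℝ) : ℂ) := by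
  rcases ha.eq_or_lt with rfl | ha
  · simp
  rw [integral_Icc_eq_integral_Ioc, ← intervalIntegral.integral_of_le (by linarith)]
  rcases eq_or_ne ω 0 with rfl | hω
  · simp [sinc_zero]; ring
  have hc : -(ω * I) ≠ 0 := by simp [hω]
  simp_rw [show ∀ y : ℝ, -((ω * y : ℝ) : ℂ) * I = -(ω * I) * y from fun y => by push_cast; ring]
  have e1 : -(ω * I) * (a : ℂ) = ((-(a * ω) : ℝ) : ℂ) * I := by push_cast; ring
  have e2 : -(ω * I) * ((-a : ℝ) : ℂ) = ((a * ω : ℝ) : ℂ) * I := by push_cast; ring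
  rw [integral_exp_mul_complex hc, sinc_of_ne_zero (mul_ne_zero ha.ne' hω), e1, e2, exp_mul_I,
    exp_mul_I, ← ofReal_cos, ← ofReal_sin, ← ofReal_cos, ← ofReal_sin, Real.cos_neg, Real.sin_neg]
  have ha' : (a : ℂ) ≠ 0 := ofReal_ne_zero.2 ha.ne'
  have hω' : (ω : ℂ) ≠ 0 := ofReal_ne_zero.2 hω
  push_cast
  field_simp
  ring_nf

lemma add_half_mem_Icc_and_sub_half_mem_Icc_iff {r x y : ℝ} :
    x + y / 2 ∈ Icc (-r) r ∧ x - y / 2 ∈ Icc (-r) r ↔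
      y ∈ Icc (-(2 * (r - |x|))) (2 * (r - |x|)) := by
  simp only [mem_Icc]
  rcases abs_cases x with ⟨h, _⟩ | ⟨h, _⟩ <;> rw [h] <;>
    exact ⟨fun ⟨⟨_, _⟩, _, _⟩ => ⟨by linarith, by linarith⟩,
      fun ⟨_, _⟩ => ⟨⟨by linarith, by linarith⟩, by linarith, by linarith⟩⟩

lemma wigner1_indicator_Icc {ℏ r x : ℝ} (hx : |x| ≤ r) (p : ℝ) :
    wigner1 ℏ ((Icc (-r) r).indicator fun _ => 1) (x, p) =
      ((2 * (r - |x|) / (π * ℏ) * sinc (2 * (r - |x|) / ℏ * p) : ℝ) : ℂ) := by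
  have hwindow : ∀ y : ℝ,
      cexp (-(I / ℏ) * (p * y : ℝ)) * (Icc (-r) r).indicator (fun _ => 1) (x + y / 2) *
        starRingEnd ℂ ((Icc (-r) r).indicator (fun _ => 1) (x - y / 2)) =
      (Icc (-(2 * (r - |x|))) (2 * (r - |x|))).indicator
        (fun y => cexp (-(p / ℏ * y : ℝ) * I)) y := by
    intro y
    simp only [indicator_apply, ← add_half_mem_Icc_and_sub_half_mem_Icc_iff]
    split_ifs <;> simp_all
    ring_nf
  simp only [wigner1, hwindow, integral_indicator measurableSet_Icc,
    integral_Icc_exp_neg_mul_I (show 0 ≤ 2 * (r - |x|) by linarith)]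
  push_cast
  field_simp

lemma not_integrable_wigner1_indicator_Icc_slice {ℏ r x : ℝ} (hℏ : ℏ ≠ 0) (hx : |x| < r) :
    ¬ Integrable (fun p => wigner1 ℏ ((Icc (-r) r).indicator fun _ => 1) (x, p)) := by
  simp only [wigner1_indicator_Icc hx.le]
  intro h
  have ha : 2 * (r - |x|) ≠ 0 := by linarith
  exact not_integrable_const_mul_sinc_mul (div_ne_zero ha (mul_ne_zero pi_ne_zero hℏ))
    (div_ne_zero ha hℏ) (by simpa only [RCLike.re_to_complex, ofReal_re] using h.re)

/-- the indicator of `[-1/2, 1/2]` is in `L¹ ∩ L²` but its Wigner transform is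
not integrable on `ℝ²`. -/
theorem wigner_indicator_not_integrable (ℏ : ℝ) (hℏ : 0 < ℏ) :
    Integrable ((Set.Icc (-(1:ℝ)/2) (1/2)).indicator (fun _ => (1 : ℂ)))
      (volume : Measure ℝ) ∧
    MemLp ((Set.Icc (-(1:ℝ)/2) (1/2)).indicator (fun _ => (1 : ℂ))) 2 (volume : Measure ℝ) ∧
    ¬ Integrable (wigner1 ℏ ((Set.Icc (-(1:ℝ)/2) (1/2)).indicator (fun _ => (1 : ℂ))))
      (volume : Measure (ℝ × ℝ)) := by
  refine ⟨(integrable_indicator_iff measurableSet_Icc).2 (integrableOn_const measure_Icc_lt_top.ne),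
    memLp_indicator_const 2 measurableSet_Icc 1 (Or.inr measure_Icc_lt_top.ne), ?_⟩
  rw [Measure.volume_eq_prod, neg_div]
  refine not_integrable_prod_of_not_integrable_slices (s := Ioo (-(1 / 2)) (1 / 2)) ?_
    fun x hx => not_integrable_wigner1_indicator_Icc_slice hℏ.ne' (abs_lt.2 hx)
  norm_num
end

section
/- (Douglas' lemma, isometry version for Hilbert–Schmidt operators) If A and A' are Hilbert–Schmidt operators on a separable Hilbert space H with A A* = A' A'*, then there exists a partial isometry U on H such that A = A' U. -/
open MeasureTheory InnerProductSpace ContinuousLinearMap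

/-- `U` is a partial isometry: it is isometric on the orthogonal complement of its kernel. -/
def IsPartialIsometry {H : Type*} [NormedAddCommGroup H] [InnerProductSpace ℂ H]
    (U : H →L[ℂ] H) : Prop :=
  ∀ x ∈ (LinearMap.ker (U : H →ₗ[ℂ] H))ᗮ, ‖U x‖ = ‖x‖

/-- Douglas' lemma, isometry version: if `A A* = A' A'*` for Hilbert–Schmidt
operators `A, A'`, then `A = A' U` for some partial isometry `U`. -/
theorem douglas_partial_isometry {H : Type*} [NormedAddCommGroup H]
    [InnerProductSpace ℂ H] [CompleteSpace H]
    (b : HilbertBasis ℕ ℂ H) (A A' : H →L[ℂ] H)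
    (hA : Summable fun j => ‖A (b j)‖ ^ 2)
    (hA' : Summable fun j => ‖A' (b j)‖ ^ 2)
    (h : A ∘L ContinuousLinearMap.adjoint A = A' ∘L ContinuousLinearMap.adjoint A') :
    ∃ U : H →L[ℂ] H, IsPartialIsometry U ∧ A = A' ∘L U := by
  classical
  set T : H →L[ℂ] H := ContinuousLinearMap.adjoint A with hT
  set T' : H →L[ℂ] H := ContinuousLinearMap.adjoint A' with hT'
  -- key norm identity
  have key : ∀ x : H, ‖T x‖ = ‖T' x‖ := by
    intro x
    have h2 : (⟪T x, T x⟫_ℂ) = ⟪T' x, T' x⟫_ℂ := by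
      have e1 : ⟪T x, T x⟫_ℂ = ⟪x, (A ∘L T) x⟫_ℂ := adjoint_inner_left A (T x) x
      have e2 : ⟪T' x, T' x⟫_ℂ = ⟪x, (A' ∘L T') x⟫_ℂ := adjoint_inner_left A' (T' x) x
      rw [e1, e2, h]
    rw [inner_self_eq_norm_sq_to_K, inner_self_eq_norm_sq_to_K] at h2
    have h3 : ‖T x‖ ^ 2 = ‖T' x‖ ^ 2 := by exact_mod_cast h2
    nlinarith [norm_nonneg (T x), norm_nonneg (T' x)]
  -- the range of T and its closure
  set Tl : H →ₗ[ℂ] H := (T : H →ₗ[ℂ] H) with hTl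
  set S : Submodule ℂ H := LinearMap.range Tl with hS
  set K : Submodule ℂ H := S.topologicalClosure with hK
  have hSK : S ≤ K := Submodule.le_topologicalClosure S
  haveI : CompleteSpace K := S.isClosed_topologicalClosure.completeSpace_coe
  -- the well-defined map f₀ : S → H, T x ↦ T' x
  have hker : LinearMap.ker Tl ≤ LinearMap.ker (T' : H →ₗ[ℂ] H) := by
    intro x hx
    have hx' : T x = 0 := hx
    have : ‖T' x‖ = 0 := by rw [← key]; simp [hx']
    simpa [LinearMap.mem_ker] using norm_eq_zero.mp this
  set f₀ : S →ₗ[ℂ] H :=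
    ((LinearMap.ker Tl).liftQ (T' : H →ₗ[ℂ] H) hker) ∘ₗ Tl.quotKerEquivRange.symm.toLinearMap
    with hf₀def
  have hf₀ : ∀ (x : H) (hx : Tl x ∈ S), f₀ ⟨Tl x, hx⟩ = T' x := by
    intro x hx
    have h1 : Tl.quotKerEquivRange.symm ⟨Tl x, hx⟩ = (LinearMap.ker Tl).mkQ x :=
      Tl.quotKerEquivRange_symm_apply_image x hx
    simp only [hf₀def, LinearMap.comp_apply, LinearEquiv.coe_toLinearMap, h1,
      Submodule.mkQ_apply, Submodule.liftQ_apply]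
    rfl
  have hiso : ∀ y : S, ‖f₀ y‖ = ‖y‖ := by
    rintro ⟨y, x, rfl⟩
    rw [hf₀ x ⟨x, rfl⟩]
    exact (key x).symm
  set f₁ : S →L[ℂ] H := f₀.mkContinuous 1 (fun y => by rw [hiso, one_mul]) with hf₁def
  have hf₁ : ∀ y : S, f₁ y = f₀ y := fun y => rfl
  -- the inclusion e : S →L K
  set el : S →ₗ[ℂ] K := Submodule.inclusion hSK with held
  set e : S →L[ℂ] K := el.mkContinuous 1 (fun x => by rw [one_mul]; exact le_of_eq rfl)
    with hed
  have he_coe : ∀ s : S, ((e s : K) : H) = (s : H) := fun s => rfl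
  have he_norm : ∀ s : S, ‖e s‖ = ‖s‖ := fun s => rfl
  have h_ui : IsUniformInducing e :=
    (AddMonoidHomClass.isometry_of_norm e he_norm).isUniformInducing
  have h_dense : DenseRange e := by
    intro y
    apply closure_subtype.mpr
    have himg : (Subtype.val '' Set.range e : Set H) = (S : Set H) := by
      ext z
      constructor
      · rintro ⟨w, ⟨s, rfl⟩, rfl⟩
        exact s.2
      · intro hz
        exact ⟨e ⟨z, hz⟩, ⟨⟨z, hz⟩, rfl⟩, rfl⟩
    rw [himg]
    rw [← Submodule.topologicalClosure_coe]
    exact y.2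
  -- the extension ψ : K →L H
  set ψ : K →L[ℂ] H := f₁.extend e with hψdef
  have hψe : ∀ s : S, ψ (e s) = f₁ s := fun s =>
    ContinuousLinearMap.extend_eq f₁ h_dense h_ui s
  have hψ_norm : ∀ y : K, ‖ψ y‖ = ‖y‖ := by
    have hc : IsClosed { y : K | ‖ψ y‖ = ‖y‖ } :=
      isClosed_eq (continuous_norm.comp ψ.continuous) continuous_norm
    intro y
    refine h_dense.induction_on y hc fun s => ?_
    rw [hψe s, hf₁, hiso, he_norm]
  -- the partial isometry U
  set U : H →L[ℂ] H := ψ ∘L (K.orthogonalProjectionOnto) with hUdef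
  have hU : ∀ x : H, U x = ψ (K.orthogonalProjectionOnto x) := fun x => rfl
  have hkerU : LinearMap.ker (U : H →ₗ[ℂ] H) = Kᗮ := by
    ext z
    rw [LinearMap.mem_ker, ContinuousLinearMap.coe_coe]
    constructor
    · intro hz
      have : ‖(K.orthogonalProjectionOnto z : K)‖ = 0 := by
        rw [← hψ_norm, ← hU, hz, norm_zero]
      rw [← Submodule.orthogonalProjectionOnto_eq_zero_iff (K := K)]
      exact norm_eq_zero.mp this
    · intro hz
      rw [hU, Submodule.orthogonalProjectionOnto_eq_zero_iff.mpr hz, map_zero]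
  refine ⟨U, ?_, ?_⟩
  · -- U is a partial isometry
    intro x hx
    rw [hkerU, Submodule.orthogonal_orthogonal] at hx
    have hPx : ((K.orthogonalProjectionOnto x : K) : H) = x := K.starProjection_eq_self_iff.mpr hx
    rw [hU, hψ_norm]
    calc ‖(K.orthogonalProjectionOnto x : K)‖ = ‖((K.orthogonalProjectionOnto x : K) : H)‖ := rfl
    _ = ‖x‖ := by rw [hPx]
  · -- A = A' ∘L U
    have hAv : ∀ v ∈ Kᗮ, A v = 0 := by
      intro v hv
      have hz : ∀ z : H, ⟪z, A v⟫_ℂ = ⟪z, (0 : H)⟫_ℂ := by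
        intro z
        rw [← adjoint_inner_left A v z, inner_zero_right]
        exact (Submodule.mem_orthogonal K v).mp hv (T z) (hSK ⟨z, rfl⟩)
      exact ext_inner_left ℂ hz
    have hmain : ∀ y : K, A (y : H) = A' (ψ y) := by
      have hc : IsClosed { y : K | A (y : H) = A' (ψ y) } :=
        isClosed_eq (A.continuous.comp continuous_subtype_val)
          (A'.continuous.comp ψ.continuous)
      intro y
      refine h_dense.induction_on y hc ?_
      rintro ⟨s, x, rfl⟩
      rw [hψe, hf₁, he_coe]
      show A (Tl x) = A' (f₀ ⟨Tl x, ⟨x, rfl⟩⟩)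
      rw [hf₀ x ⟨x, rfl⟩]
      calc A (T x) = (A ∘L T) x := rfl
      _ = (A' ∘L T') x := by rw [h]
      _ = A' (T' x) := rfl
    ext x
    have hdecomp : x = ((K.orthogonalProjectionOnto x : K) : H) +
        (x - (K.orthogonalProjectionOnto x : K)) := by abel
    rw [ContinuousLinearMap.comp_apply]
    conv_lhs => rw [hdecomp]
    rw [map_add, hAv (x - (K.orthogonalProjectionOnto x : H)) (K.sub_starProjection_mem_orthogonal x), add_zero,
      hmain (K.orthogonalProjectionOnto x), hU]
end

section
/- (Jaynes non-uniqueness, infinite-dimensional version) Two mixed states {(ψ_j, λ_j)} and {(ψ'_j, λ'_j)} in a separable Hilbert space H generate the same density operator ρ̂ if and only if there exists a partial isometry U of H with A = A' U, where A φ_j = λ_j^{1/2} ψ_j and A' φ_j = (λ'_j)^{1/2} ψ'_j relative to a fixed orthonormal basis (φ_j). -/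
open MeasureTheory InnerProductSpace

/-!
Both density operators factor through the given operators: `ρ̂ = A A*` and `ρ̂' = A' A'*`.

If `A A* = A' A'*`, then `‖A* x‖ = ‖A'* x‖` for every `x`, so `A* x ↦ A'* x` extends to a
linear isometry `W` on the closure `M` of the range of `A*`, and `U := W P_M` is a partial
isometry with `⟪A' U y, z⟫ = ⟪W P_M y, W A* z⟫ = ⟪y, A* z⟫`, i.e. `A = A' U`.

Conversely, a partial isometry is a contraction, so `A = A' U` gives
`A A* = A' (U U*) A'* ≤ A' A'*`. The positive operator `A' A'* - A A*` has trace
`∑ ‖A'* φ_j‖² - ∑ ‖A* φ_j‖² = ∑ λ'_j - ∑ λ_j = 0`, because the Hilbert–Schmidt norm of an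
operator equals that of its adjoint; a positive operator with zero trace vanishes.
-/

open ContinuousLinearMap RCLike

lemma CStarAlgebra.mul_mul_star_le_mul_star {A : Type*} [CStarAlgebra A] [PartialOrder A]
    [StarOrderedRing A] {u : A} (hu : ‖u‖ ≤ 1) (a : A) :
    a * u * star (a * u) ≤ a * star a := by
  have hu1 : u * star u ≤ 1 :=
    (CStarAlgebra.norm_le_one_iff_of_nonneg _ (mul_star_self_nonneg u)).mp <| by
      rw [CStarRing.norm_self_mul_star]; exact mul_le_one₀ hu (norm_nonneg u) hu
  simpa [star_mul, mul_assoc] using star_right_conjugate_le_conjugate hu1 a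

section Adjoint

variable {ι κ 𝕜 E F : Type*} [RCLike 𝕜] [NormedAddCommGroup E] [InnerProductSpace 𝕜 E]
  [NormedAddCommGroup F] [InnerProductSpace 𝕜 F]

lemma HilbertBasis.hasSum_norm_inner_sq (b : HilbertBasis ι 𝕜 E) (x : E) :
    HasSum (fun i => ‖⟪b i, x⟫_𝕜‖ ^ 2) (‖x‖ ^ 2) := by
  simpa [b.repr_apply_apply] using lp.hasSum_norm (p := 2) (by norm_num) (b.repr x)

lemma HilbertBasis.hasSum_norm_adjoint_apply_sq [CompleteSpace E] [CompleteSpace F]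
    (b : HilbertBasis ι 𝕜 E) (b' : HilbertBasis κ 𝕜 F) (A : E →L[𝕜] F) {c : ℝ}
    (hA : HasSum (fun i => ‖A (b i)‖ ^ 2) c) :
    HasSum (fun j => ‖adjoint A (b' j)‖ ^ 2) c := by
  set G : ι × κ → ℝ := fun p => ‖⟪b' p.2, A (b p.1)⟫_𝕜‖ ^ 2
  have hrow : ∀ i, HasSum (fun j => G (i, j)) (‖A (b i)‖ ^ 2) := fun i =>
    b'.hasSum_norm_inner_sq (A (b i))
  have hcol : ∀ j, HasSum (fun i => G (i, j)) (‖adjoint A (b' j)‖ ^ 2) := fun j => by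
    simpa only [adjoint_inner_right, norm_inner_symm] using
      b.hasSum_norm_inner_sq (adjoint A (b' j))
  have hG : Summable G := (summable_prod_of_nonneg fun _ => by positivity).mpr
    ⟨fun i => (hrow i).summable, hA.summable.congr fun i => ((hrow i).tsum_eq).symm⟩
  have hGc : HasSum G c := (hG.hasSum.prod_fiberwise hrow).unique hA ▸ hG.hasSum
  exact ((Equiv.prodComm κ ι).hasSum_iff.mpr hGc).prod_fiberwise hcol

lemma re_inner_comp_adjoint_apply_self [CompleteSpace E] [CompleteSpace F]
    (A : E →L[𝕜] F) (x : F) : re ⟪(A ∘L adjoint A) x, x⟫_𝕜 = ‖adjoint A x‖ ^ 2 := by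
  rw [apply_norm_sq_eq_inner_adjoint_left, adjoint_adjoint]

end Adjoint

section IsometryExtension

variable {𝕜 G E F : Type*} [RCLike 𝕜] [AddCommGroup G] [Module 𝕜 G]
  [NormedAddCommGroup E] [NormedSpace 𝕜 E] [NormedAddCommGroup F] [NormedSpace 𝕜 F]

lemma LinearMap.denseRange_codRestrict_topologicalClosure_range (f : G →ₗ[𝕜] E) :
    DenseRange (f.codRestrict (LinearMap.range f).topologicalClosure
      fun x => (LinearMap.range f).le_topologicalClosure (LinearMap.mem_range_self f x)) := by
  rw [DenseRange, Subtype.dense_iff, ← Set.range_comp]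
  exact (Submodule.topologicalClosure_coe _).le

lemma LinearMap.exists_linearIsometry_topologicalClosure_range [CompleteSpace F]
    (f : G →ₗ[𝕜] E) (g : G →ₗ[𝕜] F) (h : ∀ x, ‖g x‖ = ‖f x‖) :
    ∃ W : (LinearMap.range f).topologicalClosure →ₗᵢ[𝕜] F, ∀ x,
      W ⟨f x, (LinearMap.range f).le_topologicalClosure (LinearMap.mem_range_self f x)⟩ = g x := by
  set e := f.codRestrict (LinearMap.range f).topologicalClosure
    fun x => (LinearMap.range f).le_topologicalClosure (LinearMap.mem_range_self f x)
  have hdense : DenseRange e := f.denseRange_codRestrict_topologicalClosure_range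
  have hext : ∀ x, g.extendOfNorm e (e x) = g x :=
    LinearMap.extendOfNorm_eq hdense ⟨1, fun x => by rw [one_mul, h]; rfl⟩
  refine ⟨⟨g.extendOfNorm e, fun m => ?_⟩, hext⟩
  refine hdense.induction (fun _ ⟨x, hx⟩ => ?_) (isClosed_eq (by fun_prop) (by fun_prop)) m
  simp only [← hx, ContinuousLinearMap.coe_coe, hext, h]
  rfl

end IsometryExtension

section ComplexHilbert

variable {ι H E : Type*} [NormedAddCommGroup H] [InnerProductSpace ℂ H]
  [NormedAddCommGroup E] [InnerProductSpace ℂ E]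

lemma IsPartialIsometry.norm_apply_le [CompleteSpace H] {U : H →L[ℂ] H}
    (hU : IsPartialIsometry U) (x : H) : ‖U x‖ ≤ ‖x‖ := by
  set K := LinearMap.ker (U : H →ₗ[ℂ] H)
  have : CompleteSpace K := U.isClosed_ker.completeSpace_coe
  have hUx : U x = U (Kᗮ.starProjection x) := by
    conv_lhs => rw [← K.starProjection_add_starProjection_orthogonal x]
    rw [map_add, show U (K.starProjection x) = 0 from K.starProjection_apply_mem x, zero_add]
  rw [hUx, hU _ (Kᗮ.starProjection_apply_mem x)]
  exact Kᗮ.norm_starProjection_apply_le x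

lemma IsPartialIsometry.norm_le_one [CompleteSpace H] {U : H →L[ℂ] H}
    (hU : IsPartialIsometry U) : ‖U‖ ≤ 1 :=
  U.opNorm_le_bound zero_le_one fun x => (one_mul ‖x‖).symm ▸ hU.norm_apply_le x

lemma isPartialIsometry_comp_orthogonalProjectionOnto (K : Submodule ℂ H)
    [K.HasOrthogonalProjection] (W : K →ₗᵢ[ℂ] H) :
    IsPartialIsometry (W.toContinuousLinearMap ∘L K.orthogonalProjectionOnto) := by
  intro x hx
  have hker : Kᗮ ≤ LinearMap.ker
      ((W.toContinuousLinearMap ∘L K.orthogonalProjectionOnto : H →L[ℂ] H) : H →ₗ[ℂ] H) :=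
    fun y hy => by simp [K.orthogonalProjectionOnto_apply_of_mem_orthogonal hy]
  have hxK : x ∈ K := K.orthogonal_orthogonal ▸ Submodule.orthogonal_le hker hx
  simp [K.orthogonalProjectionOnto_mem_subspace_eq_self ⟨x, hxK⟩]

theorem exists_isPartialIsometry_eq_comp_of_comp_adjoint_eq [CompleteSpace H] [CompleteSpace E]
    {A A' : H →L[ℂ] E} (h : A ∘L adjoint A = A' ∘L adjoint A') :
    ∃ U, IsPartialIsometry U ∧ A = A' ∘L U := by
  have hnorm : ∀ z, ‖adjoint A' z‖ = ‖adjoint A z‖ := fun z => by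
    rw [← sq_eq_sq₀ (norm_nonneg _) (norm_nonneg _), apply_norm_sq_eq_inner_adjoint_left,
      apply_norm_sq_eq_inner_adjoint_left, adjoint_adjoint, adjoint_adjoint, h]
  obtain ⟨W, hW⟩ := LinearMap.exists_linearIsometry_topologicalClosure_range
    (adjoint A : E →ₗ[ℂ] H) (adjoint A' : E →ₗ[ℂ] H) hnorm
  simp only [coe_coe] at hW
  refine ⟨W.toContinuousLinearMap ∘L Submodule.orthogonalProjectionOnto _,
    isPartialIsometry_comp_orthogonalProjectionOnto _ W, ?_⟩
  ext y
  refine ext_inner_right ℂ fun z => ?_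
  calc ⟪A y, z⟫_ℂ = ⟪y, adjoint A z⟫_ℂ := (adjoint_inner_right A y z).symm
    _ = ⟪W (Submodule.orthogonalProjectionOnto _ y), adjoint A' z⟫_ℂ := by
      rw [← hW z, W.inner_map_map, Submodule.inner_orthogonalProjectionOnto_eq_of_mem_right]
    _ = ⟪(A' ∘L W.toContinuousLinearMap ∘L Submodule.orthogonalProjectionOnto _) y, z⟫_ℂ :=
      adjoint_inner_right A' _ z

lemma eq_zero_of_nonneg_of_hasSum_re_inner_zero [CompleteSpace H] (b : HilbertBasis ι ℂ H)
    {D : H →L[ℂ] H} (hD : 0 ≤ D) (h : HasSum (fun i => re ⟪D (b i), b i⟫_ℂ) 0) : D = 0 := by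
  obtain ⟨S, rfl⟩ := CStarAlgebra.nonneg_iff_eq_star_mul_self.mp hD
  have hnorm : ∀ x, re ⟪(star S * S) x, x⟫_ℂ = ‖S x‖ ^ 2 := fun x => by
    rw [star_eq_adjoint, mul_def, apply_norm_sq_eq_inner_adjoint_left]
  simp only [hnorm] at h
  have hSb : ∀ i, S (b i) = 0 := fun i => by
    simpa using congrFun ((hasSum_zero_iff_of_nonneg fun i => by positivity).mp h) i
  have hS : S = 0 := ext_on (Submodule.dense_iff_topologicalClosure_eq_top.mpr b.dense_span)
    fun _ ⟨i, hi⟩ => hi ▸ hSb i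
  rw [hS, star_zero, zero_mul]

lemma comp_adjoint_eq_of_eq_comp_of_norm_le_one [CompleteSpace H] (b : HilbertBasis ι ℂ H)
    {A A' U : H →L[ℂ] H} {c : ℝ} (hA : HasSum (fun i => ‖A (b i)‖ ^ 2) c)
    (hA' : HasSum (fun i => ‖A' (b i)‖ ^ 2) c) (hU : ‖U‖ ≤ 1) (hAU : A = A' ∘L U) :
    A ∘L adjoint A = A' ∘L adjoint A' := by
  have hle : A ∘L adjoint A ≤ A' ∘L adjoint A' := by
    simpa [hAU, mul_def, star_eq_adjoint, adjoint_comp, comp_assoc] using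
      CStarAlgebra.mul_mul_star_le_mul_star hU A'
  have htrace : HasSum (fun i => re ⟪(A' ∘L adjoint A' - A ∘L adjoint A) (b i), b i⟫_ℂ) 0 := by
    simpa only [sub_apply, inner_sub_left, map_sub, re_inner_comp_adjoint_apply_self, sub_self]
      using (b.hasSum_norm_adjoint_apply_sq b A' hA').sub (b.hasSum_norm_adjoint_apply_sq b A hA)
  exact (sub_eq_zero.mp
    (eq_zero_of_nonneg_of_hasSum_re_inner_zero b (sub_nonneg.mpr hle) htrace)).symm

theorem comp_adjoint_eq_iff_exists_isPartialIsometry [CompleteSpace H] (b : HilbertBasis ι ℂ H)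
    {A A' : H →L[ℂ] H} {c : ℝ} (hA : HasSum (fun i => ‖A (b i)‖ ^ 2) c)
    (hA' : HasSum (fun i => ‖A' (b i)‖ ^ 2) c) :
    A ∘L adjoint A = A' ∘L adjoint A' ↔ ∃ U, IsPartialIsometry U ∧ A = A' ∘L U :=
  ⟨exists_isPartialIsometry_eq_comp_of_comp_adjoint_eq, fun ⟨_, hU, hAU⟩ =>
    comp_adjoint_eq_of_eq_comp_of_norm_le_one b hA hA' hU.norm_le_one hAU⟩

lemma comp_adjoint_apply_eq_tsum [CompleteSpace H] [CompleteSpace E] (b : HilbertBasis ι ℂ H)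
    {lam : ι → ℝ} (hlam : ∀ i, 0 ≤ lam i) {ψ : ι → E} {A : H →L[ℂ] E}
    (hA : ∀ i, A (b i) = (√(lam i) : ℂ) • ψ i) (x : E) :
    (A ∘L adjoint A) x = ∑' i, (lam i : ℂ) • (⟪ψ i, x⟫_ℂ • ψ i) := by
  rw [comp_apply]
  refine (HasSum.tsum_eq (((b.hasSum_repr (adjoint A x)).mapL A).congr_fun fun i => ?_)).symm
  rw [map_smul, b.repr_apply_apply, adjoint_inner_right, hA, inner_smul_left, Complex.conj_ofReal,
    smul_smul, smul_smul, mul_right_comm, ← Complex.ofReal_mul, Real.mul_self_sqrt (hlam i)]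

end ComplexHilbert

lemma norm_ofReal_sqrt_smul_sq {E : Type*} [NormedAddCommGroup E] [NormedSpace ℂ E] {r : ℝ}
    (hr : 0 ≤ r) (x : E) : ‖(√r : ℂ) • x‖ ^ 2 = r * ‖x‖ ^ 2 := by
  rw [norm_smul, Complex.norm_real, Real.norm_of_nonneg (Real.sqrt_nonneg r), mul_pow,
    Real.sq_sqrt hr]

/-- Jaynes non-uniqueness, infinite-dimensional version: two mixed states
generate the same density operator iff `A = A' U` for some partial isometry `U`. -/
theorem jaynes_nonuniqueness {H : Type*} [NormedAddCommGroup H]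
    [InnerProductSpace ℂ H] [CompleteSpace H]
    (b : HilbertBasis ℕ ℂ H) (lam lam' : ℕ → ℝ) (ψ ψ' : ℕ → H)
    (hlam : ∀ j, 0 ≤ lam j) (hlam' : ∀ j, 0 ≤ lam' j)
    (hsum : ∑' j, lam j = 1) (hsum' : ∑' j, lam' j = 1)
    (hlsum : Summable lam) (hlsum' : Summable lam')
    (hψ : ∀ j, ‖ψ j‖ = 1) (hψ' : ∀ j, ‖ψ' j‖ = 1)
    (A A' : H →L[ℂ] H)
    (hA : ∀ j, A (b j) = (Real.sqrt (lam j) : ℂ) • ψ j)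
    (hA' : ∀ j, A' (b j) = (Real.sqrt (lam' j) : ℂ) • ψ' j) :
    (∀ x : H, (∑' j, (lam j : ℂ) • ((inner ℂ (ψ j) x : ℂ) • ψ j)) =
        ∑' j, (lam' j : ℂ) • ((inner ℂ (ψ' j) x : ℂ) • ψ' j)) ↔
      ∃ U : H →L[ℂ] H, IsPartialIsometry U ∧ A = A' ∘L U := by
  have hHS : HasSum (fun j => ‖A (b j)‖ ^ 2) 1 := hsum ▸ hlsum.hasSum.congr_fun fun j => by
    rw [hA, norm_ofReal_sqrt_smul_sq (hlam j), hψ, one_pow, mul_one]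
  have hHS' : HasSum (fun j => ‖A' (b j)‖ ^ 2) 1 := hsum' ▸ hlsum'.hasSum.congr_fun fun j => by
    rw [hA', norm_ofReal_sqrt_smul_sq (hlam' j), hψ', one_pow, mul_one]
  simp only [← comp_adjoint_apply_eq_tsum b hlam hA, ← comp_adjoint_apply_eq_tsum b hlam' hA',
    ← ContinuousLinearMap.ext_iff]
  exact comp_adjoint_eq_iff_exists_isPartialIsometry b hHS hHS'
end
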